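/- Let H⁺, H⁻, A⁺, A⁻ be modules that are direct sums of finite-dimensional simple modules, with injections H± ↪ A±, character identity ch H⁺ − ch H⁻ = ch A⁺ − ch A⁻, and the parity condition Hom(A⁺, A⁻) = 0 (no common simple constituents of A⁺ and A⁻). Then the injections H± ↪ A± are isomorphisms. -/
import Mathlib

/-- (Modules identified with their multiplicity functions on the set `ι`
of isomorphism classes of finite-dimensional simples.)  Injections `H± ↪ A±` with
`ch H⁺ − ch H⁻ = ch A⁺ − ch A⁻` and the parity condition `Hom(A⁺, A⁻) = 0`
(no simple occurs in both `A⁺` and `A⁻`) are isomorphisms. -/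
theorem injections_with_parity_are_isomorphisms {ι : Type*} (Hp Hm Ap Am : ι → ℕ)
    (hinjp : ∀ i, Hp i ≤ Ap i) (hinjm : ∀ i, Hm i ≤ Am i)
    (hch : ∀ i, (Hp i : ℤ) - (Hm i : ℤ) = (Ap i : ℤ) - (Am i : ℤ))
    (hparity : ∀ i, Ap i = 0 ∨ Am i = 0) :
    Hp = Ap ∧ Hm = Am := by
  constructor <;> funext i <;>
    · have h1 := hinjp i; have h2 := hinjm i; have h3 := hch i; have h4 := hparity i
      omega
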